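/- arXiv:1212.0713 — 4 statements merged into one kernel-verified Lean document; each statement's English description precedes it below -/
import Mathlib

section
/- Let V be a finite-dimensional complex inner product space regarded as a real inner product space via the real part ⟨·,·⟩ of its Hermitian inner product, J multiplication by i, and U a real subspace of V satisfying J(U) ∩ U^⊥ = {0}. Then the operator J_U = R⁻¹ ∘ G : U → U is an isometry: ⟨J_U(u), J_U(v)⟩ = ⟨u, v⟩ for all u, v ∈ U. -/
open scoped RealInnerProductSpace

/-- A complex inner product space regarded as a real inner product space via the real
part of its Hermitian inner product. -/
noncomputable instance {V : Type*} [NormedAddCommGroup V] [InnerProductSpace ℂ V] :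
    InnerProductSpace ℝ V := InnerProductSpace.complexToReal

/-- Multiplication by `i = √-1` as an `ℝ`-linear map `J : V → V`. -/
noncomputable def Jmul (V : Type*) [NormedAddCommGroup V] [InnerProductSpace ℂ V] :
    V →ₗ[ℝ] V :=
  LinearMap.restrictScalars ℝ (Complex.I • (LinearMap.id : V →ₗ[ℂ] V))

/-- The operator `G : U → U`, `G(u) = p_U(J(u))`, where `p_U` is the orthogonal
projection of `V` onto the real subspace `U`. -/
noncomputable def Gop {V : Type*} [NormedAddCommGroup V] [InnerProductSpace ℂ V]
    [FiniteDimensional ℂ V] (U : Submodule ℝ V) : U →ₗ[ℝ] U :=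
  letI : FiniteDimensional ℝ V := FiniteDimensional.trans ℝ ℂ V
  (U.orthogonalProjectionOnto).toLinearMap ∘ₗ (Jmul V) ∘ₗ U.subtype

/-- `R = (-G²)^{1/2}` is characterized as the (unique) symmetric positive definite
operator on `U` whose square is `-G²`; `Rinv` is its inverse, so that
`J_U = R⁻¹ ∘ G = Rinv ∘ₗ Gop U`. -/
theorem JU_isometry {V : Type*} [NormedAddCommGroup V] [InnerProductSpace ℂ V]
    [FiniteDimensional ℂ V] (U : Submodule ℝ V)
    (hU : U.map (Jmul V) ⊓ Uᗮ = ⊥)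
    (R : U →ₗ[ℝ] U)
    (hRsymm : ∀ u v : U, ⟪R u, v⟫ = ⟪u, R v⟫)
    (hRpos : ∀ u : U, u ≠ 0 → 0 < ⟪R u, u⟫)
    (hRsq : R ∘ₗ R = -(Gop U ∘ₗ Gop U))
    (Rinv : U →ₗ[ℝ] U)
    (hRinv : Rinv ∘ₗ R = LinearMap.id ∧ R ∘ₗ Rinv = LinearMap.id) :
    ∀ u v : U, ⟪Rinv (Gop U u), Rinv (Gop U v)⟫ = ⟪u, v⟫ := by
  haveI : FiniteDimensional ℝ V := FiniteDimensional.trans ℝ ℂ V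
  -- J is skew with respect to the real inner product
  have hJskew : ∀ x y : V, ⟪Jmul V x, y⟫ = -⟪x, Jmul V y⟫ := by
    intro x y
    have hx : Jmul V x = Complex.I • x := rfl
    have hy : Jmul V y = Complex.I • y := rfl
    rw [hx, hy]
    have : (inner ℂ (Complex.I • x) y : ℂ) = - inner ℂ x (Complex.I • y) := by
      rw [inner_smul_left, inner_smul_right]
      simp [Complex.conj_I]
    have := congrArg Complex.re this
    rw [real_inner_eq_re_inner ℂ, real_inner_eq_re_inner ℂ]; exact this
  -- G is skew-symmetric
  have hGskew : ∀ u v : U, ⟪Gop U u, v⟫ = -⟪u, Gop U v⟫ := by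
    intro u v
    have h1 : ⟪Gop U u, v⟫ = ⟪Jmul V (u : V), (v : V)⟫ := by
      simp only [Gop, LinearMap.coe_comp, Function.comp_apply, Submodule.coe_subtype,
        ContinuousLinearMap.coe_coe]
      exact Submodule.inner_orthogonalProjectionOnto_eq_of_mem_right (K := U) v (Jmul V (u : V))
    have h2 : ⟪u, Gop U v⟫ = ⟪(u : V), Jmul V (v : V)⟫ := by
      simp only [Gop, LinearMap.coe_comp, Function.comp_apply, Submodule.coe_subtype,
        ContinuousLinearMap.coe_coe]
      exact Submodule.inner_orthogonalProjectionOnto_eq_of_mem_left (K := U) u (Jmul V (v : V))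
    rw [h1, h2, hJskew]
  set G := Gop U with hG
  have hinv1 : ∀ w : U, Rinv (R w) = w := fun w =>
    congrFun (congrArg (fun f => f.toFun) hRinv.1) w
  have hinv2 : ∀ w : U, R (Rinv w) = w := fun w =>
    congrFun (congrArg (fun f => f.toFun) hRinv.2) w
  have hRR : ∀ w : U, R (R w) = -(G (G w)) := fun w =>
    congrFun (congrArg (fun f => f.toFun) hRsq) w
  have hRinvsymm : ∀ u v : U, ⟪Rinv u, v⟫ = ⟪u, Rinv v⟫ := by
    intro u v
    calc ⟪Rinv u, v⟫ = ⟪Rinv u, R (Rinv v)⟫ := by rw [hinv2]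
    _ = ⟪R (Rinv u), Rinv v⟫ := (hRsymm _ _).symm
    _ = ⟪u, Rinv v⟫ := by rw [hinv2]
  -- G commutes with Rinv ∘ Rinv
  have hcomm : ∀ v : U, Rinv (Rinv (G v)) = G (Rinv (Rinv v)) := by
    intro v
    set a := Rinv (Rinv v) with ha
    have hv : v = R (R a) := by rw [ha, hinv2, hinv2]
    have hGv : G v = R (R (G a)) := by
      rw [hv]; simp [hRR]
    rw [hGv, hinv1, hinv1]
  intro u v
  calc ⟪Rinv (G u), Rinv (G v)⟫ = ⟪G u, Rinv (Rinv (G v))⟫ := hRinvsymm _ _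
  _ = ⟪G u, G (Rinv (Rinv v))⟫ := by rw [hcomm]
  _ = -⟪u, G (G (Rinv (Rinv v)))⟫ := hGskew _ _
  _ = ⟪u, -(G (G (Rinv (Rinv v))))⟫ := by rw [inner_neg_right]
  _ = ⟪u, R (R (Rinv (Rinv v)))⟫ := by rw [hRR]
  _ = ⟪u, v⟫ := by rw [hinv2, hinv2]
end

section
/- Let V be a finite-dimensional complex inner product space regarded as a real inner product space via the real part ⟨·,·⟩ of its Hermitian inner product, J multiplication by i, and U a real subspace of V satisfying J(U) ∩ U^⊥ = {0}. Then the operator J_U = R⁻¹ ∘ G preserves the form ω(u, v) = ⟨J(u), v⟩ on U: ω(J_U(u), J_U(v)) = ω(u, v) for all u, v ∈ U. -/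
open scoped RealInnerProductSpace

/-- `R = (-G²)^{1/2}` is characterized as the (unique) symmetric positive definite
operator on `U` whose square is `-G²`; `Rinv` is its inverse, so that
`J_U = R⁻¹ ∘ G = Rinv ∘ₗ Gop U`. -/
theorem JU_preserves_omega {V : Type*} [NormedAddCommGroup V] [InnerProductSpace ℂ V]
    [FiniteDimensional ℂ V] (U : Submodule ℝ V)
    (hU : U.map (Jmul V) ⊓ Uᗮ = ⊥)
    (R : U →ₗ[ℝ] U)
    (hRsymm : ∀ u v : U, ⟪R u, v⟫ = ⟪u, R v⟫)
    (hRpos : ∀ u : U, u ≠ 0 → 0 < ⟪R u, u⟫)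
    (hRsq : R ∘ₗ R = -(Gop U ∘ₗ Gop U))
    (Rinv : U →ₗ[ℝ] U)
    (hRinv : Rinv ∘ₗ R = LinearMap.id ∧ R ∘ₗ Rinv = LinearMap.id) :
    ∀ u v : U, ⟪Jmul V (↑(Rinv (Gop U u)) : V), (↑(Rinv (Gop U v)) : V)⟫
      = ⟪Jmul V (u : V), (v : V)⟫ := by
  letI : FiniteDimensional ℝ V := FiniteDimensional.trans ℝ ℂ V
  set G := Gop U with hGdef
  -- pointwise versions of the operator identities
  have hRR : ∀ w : U, R (R w) = -(G (G w)) := fun w => by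
    simpa using LinearMap.ext_iff.mp hRsq w
  obtain ⟨hIR', hRI'⟩ := hRinv
  have hIR : ∀ w : U, Rinv (R w) = w := fun w => by
    simpa using LinearMap.ext_iff.mp hIR' w
  have hRI : ∀ w : U, R (Rinv w) = w := fun w => by
    simpa using LinearMap.ext_iff.mp hRI' w
  -- J is skew with respect to the real inner product
  have hJapp : ∀ x : V, Jmul V x = Complex.I • x := fun x => rfl
  have hreal : ∀ x y : V, ⟪x, y⟫ = Complex.re (inner (𝕜 := ℂ) x y) := fun _ _ => rfl
  have hJ : ∀ x y : V, ⟪Jmul V x, y⟫ = -⟪x, Jmul V y⟫ := by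
    intro x y
    rw [hJapp, hJapp, hreal, hreal, inner_smul_left, inner_smul_right, Complex.conj_I]
    simp [Complex.mul_re]
  -- the key identity: ω(a, b) = ⟪G a, b⟫ for a, b ∈ U
  have key : ∀ a b : U, ⟪Jmul V (a : V), (b : V)⟫ = ⟪G a, b⟫ := by
    intro a b
    rw [hGdef]
    simp only [Gop, LinearMap.comp_apply, ContinuousLinearMap.coe_coe, Submodule.coe_subtype]
    exact (Submodule.inner_orthogonalProjectionOnto_eq_of_mem_right (K := U) b (Jmul V (a : V))).symm
  -- G is skew-symmetric on U
  have hGskew : ∀ a b : U, ⟪G a, b⟫ = -⟪a, G b⟫ := by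
    intro a b
    rw [← key a b, hJ, real_inner_comm]
    rw [show (inner (𝕜 := ℝ) (Jmul V (b : V)) (a : V)) = ⟪G b, a⟫ from key b a,
      real_inner_comm]
  -- the commutator X = RG - GR is symmetric and anticommutes with R
  set X : U →ₗ[ℝ] U := R ∘ₗ G - G ∘ₗ R with hXdef
  have hXsymm : X.IsSymmetric := by
    intro u v
    simp only [hXdef, LinearMap.sub_apply, LinearMap.comp_apply, inner_sub_left,
      inner_sub_right]
    rw [hRsymm (G u) v, hGskew u (R v), hGskew (R u) v, hRsymm u (G v)]
    ring
  have hRX : ∀ w : U, R (X w) + X (R w) = 0 := by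
    intro w
    have h : R (X w) + X (R w) = R (R (G w)) - G (R (R w)) := by
      simp only [hXdef, LinearMap.sub_apply, LinearMap.comp_apply, map_sub]
      abel
    rw [h, hRR (G w), hRR w, map_neg, neg_sub_neg, sub_self]
  -- hence X = 0 (spectral argument)
  have hX0 : X = 0 := by
    haveI : FiniteDimensional ℝ U := inferInstance
    set b := hXsymm.eigenvectorBasis (rfl : Module.finrank ℝ U = Module.finrank ℝ U) with hb
    apply b.toBasis.ext
    intro i
    simp only [OrthonormalBasis.coe_toBasis, LinearMap.zero_apply]
    have hw : X (b i) = (hXsymm.eigenvalues rfl i : ℝ) • b i := by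
      exact_mod_cast hXsymm.apply_eigenvectorBasis rfl i
    set μ := hXsymm.eigenvalues rfl i with hμ
    have hwne : b i ≠ 0 := b.orthonormal.ne_zero i
    have h1 : ⟪X (R (b i)), b i⟫ = μ * ⟪R (b i), b i⟫ := by
      rw [hXsymm (R (b i)) (b i), hw, real_inner_smul_right]
    have h2 : X (R (b i)) = -(μ • R (b i)) := by
      have h := hRX (b i)
      rw [hw, map_smul, add_comm] at h
      exact eq_neg_of_add_eq_zero_left h
    have h3 : ⟪X (R (b i)), b i⟫ = -(μ * ⟪R (b i), b i⟫) := by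
      rw [h2, inner_neg_left, real_inner_smul_left]
    have hpos := hRpos (b i) hwne
    have h4 : μ * ⟪R (b i), b i⟫ = 0 := by linarith
    have h5 : μ = 0 := by
      rcases mul_eq_zero.mp h4 with h | h
      · exact h
      · exact absurd h (ne_of_gt hpos)
    rw [hw, h5, zero_smul]
  -- so R commutes with G, and Rinv commutes with G
  have hcomm : ∀ w : U, R (G w) = G (R w) := by
    intro w
    have h := LinearMap.ext_iff.mp hX0 w
    simp only [hXdef, LinearMap.sub_apply, LinearMap.comp_apply, LinearMap.zero_apply] at h
    exact sub_eq_zero.mp h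
  have hcommInv : ∀ w : U, Rinv (G w) = G (Rinv w) := by
    intro w
    conv_lhs => rw [← hRI w]
    rw [← hcomm (Rinv w), hIR]
  have hIsymm : ∀ a c : U, ⟪Rinv a, c⟫ = ⟪a, Rinv c⟫ := by
    intro a c
    conv_lhs => rw [← hRI c]
    rw [← hRsymm (Rinv a) (Rinv c), hRI]
  -- the final computation
  intro u v
  rw [key (Rinv (G u)) (Rinv (G v)), key u v]
  calc ⟪G (Rinv (G u)), Rinv (G v)⟫
      = ⟪Rinv (G (G u)), Rinv (G v)⟫ := by conv_rhs => rw [hcommInv (G u)]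
    _ = ⟪Rinv (Rinv (G (G u))), G v⟫ := (hIsymm (Rinv (G (G u))) (G v)).symm
    _ = ⟪-u, G v⟫ := by
        have h5 : G (G u) = -(R (R u)) := by rw [hRR u, neg_neg]
        rw [h5, map_neg, map_neg, hIR (R u), hIR u]
    _ = ⟪G u, v⟫ := by rw [inner_neg_left]; exact (hGskew u v).symm
end

section
/- Let V be a finite-dimensional complex inner product space regarded as a real inner product space via the real part ⟨·,·⟩ of its Hermitian inner product, J multiplication by i, and U a real subspace of V satisfying J(U) ∩ U^⊥ = {0}. Then the operator J_U = R⁻¹ ∘ G commutes with G: G ∘ J_U = J_U ∘ G on U. -/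
open scoped RealInnerProductSpace

/-- `R = (-G²)^{1/2}` is characterized as the (unique) symmetric positive definite
operator on `U` whose square is `-G²`; `Rinv` is its inverse, so that
`J_U = R⁻¹ ∘ G = Rinv ∘ₗ Gop U`. -/
theorem Gop_comm_JU {V : Type*} [NormedAddCommGroup V] [InnerProductSpace ℂ V]
    [FiniteDimensional ℂ V] (U : Submodule ℝ V)
    (hU : U.map (Jmul V) ⊓ Uᗮ = ⊥)
    (R : U →ₗ[ℝ] U)
    (hRsymm : ∀ u v : U, ⟪R u, v⟫ = ⟪u, R v⟫)
    (hRpos : ∀ u : U, u ≠ 0 → 0 < ⟪R u, u⟫)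
    (hRsq : R ∘ₗ R = -(Gop U ∘ₗ Gop U))
    (Rinv : U →ₗ[ℝ] U)
    (hRinv : Rinv ∘ₗ R = LinearMap.id ∧ R ∘ₗ Rinv = LinearMap.id) :
    Gop U ∘ₗ (Rinv ∘ₗ Gop U) = (Rinv ∘ₗ Gop U) ∘ₗ Gop U := by
  obtain ⟨hRinv1, hRinv2⟩ := hRinv
  haveI : FiniteDimensional ℝ V := FiniteDimensional.trans ℝ ℂ V
  set G := Gop U with hG
  -- R squared applied pointwise
  have hRsq' : ∀ x : U, R (R x) = -G (G x) := by
    intro x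
    have := congrArg (fun T => T x) hRsq
    simpa using this
  -- Step 1 : R commutes with G
  have hRG : ∀ x : U, R (G x) = G (R x) := by
    have hsymm : LinearMap.IsSymmetric R := fun u v => hRsymm u v
    have htop : (⨆ μ : ℝ, Module.End.eigenspace R μ) = ⊤ :=
      Submodule.orthogonal_eq_bot_iff.mp hsymm.orthogonalComplement_iSup_eigenspaces_eq_bot
    intro u
    have hu : u ∈ (⨆ μ : ℝ, Module.End.eigenspace R μ) := htop ▸ Submodule.mem_top
    refine Submodule.iSup_induction (motive := fun x => R (G x) = G (R x))
      (fun μ => Module.End.eigenspace R μ) hu ?_ ?_ ?_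
    · intro μ x hx
      rw [Module.End.mem_eigenspace_iff] at hx
      rcases eq_or_ne x 0 with rfl | hx0
      · simp
      -- μ > 0
      have hμpos : 0 < μ := by
        have h1 := hRpos x hx0
        rw [hx, real_inner_smul_left] at h1
        have h2 : 0 < ⟪x, x⟫ := by
          rw [real_inner_self_eq_norm_sq]
          exact pow_pos (norm_pos_iff.mpr hx0) 2
        nlinarith
      -- v := R (G x) - μ • G x  satisfies (R + μ) v = 0
      set v := R (G x) - μ • G x with hv
      have hRRx : R (R x) = (μ ^ 2) • x := by
        rw [hx, map_smul, hx, smul_smul]; ring_nf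
      have hkill : R v + μ • v = 0 := by
        have h1 : R (R (G x)) = μ ^ 2 • G x := by
          rw [hRsq' (G x)]
          have h2 : G (R (R x)) = G (-G (G x)) := by rw [hRsq' x]
          rw [map_neg] at h2
          calc -G (G (G x)) = G (R (R x)) := h2.symm
            _ = μ ^ 2 • G x := by rw [hRRx, map_smul]
        rw [hv, map_sub, map_smul, h1]
        module
      have hv0 : v = 0 := by
        by_contra hv0
        have h1 := hRpos v hv0
        have h2 : R v = -μ • v := by
          have := hkill
          have : R v = -(μ • v) := by linear_combination (norm := module) this
          simpa using this
        rw [h2, real_inner_smul_left] at h1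
        have h3 : 0 < ⟪v, v⟫ := by
          rw [real_inner_self_eq_norm_sq]
          exact pow_pos (norm_pos_iff.mpr hv0) 2
        nlinarith
      have h5 : R (G x) - μ • G x = 0 := hv ▸ hv0
      rw [sub_eq_zero.mp h5, hx, map_smul]
    · simp
    · intro x y hx hy
      rw [map_add, map_add, map_add, hx, hy, ← map_add]
  -- Step 2 : Rinv commutes with G
  have hRinvG : ∀ x : U, Rinv (G x) = G (Rinv x) := by
    intro x
    have h1 : ∀ y : U, Rinv (R y) = y := fun y => congrArg (fun T => T y) hRinv1
    have h2 : ∀ y : U, R (Rinv y) = y := fun y => congrArg (fun T => T y) hRinv2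
    calc Rinv (G x) = Rinv (G (R (Rinv x))) := by rw [h2]
      _ = Rinv (R (G (Rinv x))) := by rw [hRG]
      _ = G (Rinv x) := h1 _
  ext x
  simp only [LinearMap.comp_apply]
  simp only [hRinvG]
end

section
/- Let V = ℂ² with the standard Hermitian inner product regarded as a real inner product space via its real part ⟨·,·⟩, J multiplication by i, and for r ∈ ℝ let U_r be the real span of u₁ = (1, 0) and u₂(r) = (i, r). Let G(u) = p_{U_r}(J(u)), R = (-G²)^{1/2} the positive definite symmetric square root of -G², and J_{U_r} = R⁻¹ ∘ G. Then J_{U_r}(u₁) = (1/√(1+r²)) · u₂(r) and J_{U_r}(u₂(r)) = -√(1+r²) · u₁. -/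
open scoped RealInnerProductSpace

/-- The vector `u₁ = (1, 0) ∈ ℂ²`. -/
noncomputable def u₁ : EuclideanSpace ℂ (Fin 2) :=
  (WithLp.equiv 2 (Fin 2 → ℂ)).symm ![1, 0]

/-- The vector `u₂(r) = (i, r) ∈ ℂ²`. -/
noncomputable def u₂ (r : ℝ) : EuclideanSpace ℂ (Fin 2) :=
  (WithLp.equiv 2 (Fin 2 → ℂ)).symm ![Complex.I, (r : ℂ)]

/-- `U_r`, the real span of `u₁` and `u₂(r)` in `ℂ²`. -/
noncomputable def Ur (r : ℝ) : Submodule ℝ (EuclideanSpace ℂ (Fin 2)) :=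
  Submodule.span ℝ {u₁, u₂ r}

private lemma proj_eq_aux (r : ℝ) (v w : EuclideanSpace ℂ (Fin 2)) (hw : w ∈ Ur r)
    (ha : ⟪v - w, u₁⟫ = 0) (hb : ⟪v - w, u₂ r⟫ = 0) :
    ((Ur r).orthogonalProjectionOnto v : EuclideanSpace ℂ (Fin 2)) = w := by
  apply Submodule.eq_starProjection_of_mem_of_inner_eq_zero hw
  intro x hx
  induction hx using Submodule.span_induction with
  | mem y hy => rcases hy with h | h <;> subst h <;> assumption
  | zero => exact inner_zero_right _
  | add y z _ _ hy hz => rw [inner_add_right, hy, hz, add_zero]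
  | smul a y _ hy => rw [real_inner_smul_right, hy, mul_zero]

private lemma Gop_u₁ (r : ℝ) (h₁ : u₁ ∈ Ur r) (h₂ : u₂ r ∈ Ur r) :
    Gop (Ur r) ⟨u₁, h₁⟩ = (1 + r ^ 2)⁻¹ • (⟨u₂ r, h₂⟩ : Ur r) := by
  apply Subtype.ext
  show ((Ur r).orthogonalProjectionOnto (Jmul _ u₁) : EuclideanSpace ℂ (Fin 2)) = _
  rw [show ((((1 + r ^ 2)⁻¹ : ℝ) • (⟨u₂ r, h₂⟩ : Ur r) : Ur r) : EuclideanSpace ℂ (Fin 2))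
      = (1 + r ^ 2)⁻¹ • u₂ r from rfl]
  apply proj_eq_aux r _ _ (Submodule.smul_mem _ _ h₂) <;>
  · rw [real_inner_eq_re_inner (𝕜 := ℂ)]
    simp [Jmul, u₁, u₂, PiLp.inner_apply, Fin.sum_univ_two, Complex.ext_iff]
    try simp [← Complex.ofReal_pow, ← Complex.ofReal_one, ← Complex.ofReal_add,
      Complex.normSq_ofReal]
    try field_simp
    try ring

private lemma Gop_u₂ (r : ℝ) (h₁ : u₁ ∈ Ur r) (h₂ : u₂ r ∈ Ur r) :
    Gop (Ur r) ⟨u₂ r, h₂⟩ = -(⟨u₁, h₁⟩ : Ur r) := by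
  apply Subtype.ext
  show ((Ur r).orthogonalProjectionOnto (Jmul _ (u₂ r)) : EuclideanSpace ℂ (Fin 2)) = _
  rw [show ((-(⟨u₁, h₁⟩ : Ur r) : Ur r) : EuclideanSpace ℂ (Fin 2)) = -u₁ from rfl]
  apply proj_eq_aux r _ _ (Submodule.neg_mem _ h₁) <;>
  · rw [real_inner_eq_re_inner (𝕜 := ℂ)]
    simp [Jmul, u₁, u₂, PiLp.inner_apply, Fin.sum_univ_two, Complex.ext_iff]



set_option synthInstance.maxHeartbeats 1000000 in
private lemma neg_smul_contra (r : ℝ) (R : Ur r →ₗ[ℝ] Ur r)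
    (hRpos : ∀ u : Ur r, u ≠ 0 → 0 < ⟪R u, u⟫) (c : ℝ) (hcpos : 0 < c)
    (u : Ur r) (hne : u ≠ 0) (h0 : R u = (-c) • u) : False := by
  have hpos := hRpos u hne
  have key : ⟪R u, u⟫ = -c * ‖u‖ ^ 2 := by
    rw [h0]
    rw [real_inner_smul_left u u (-c), real_inner_self_eq_norm_sq u]
  rw [key] at hpos
  have hn : 0 < ‖u‖ ^ 2 := by
    have := norm_pos_iff.2 hne
    positivity
  nlinarith

set_option maxHeartbeats 1000000 in
set_option synthInstance.maxHeartbeats 1000000 in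
/-- With `R = (-G²)^{1/2}` the symmetric positive definite square root of `-G²` on
`U_r` (with inverse `Rinv`), the complex structure `J_{U_r} = R⁻¹ ∘ G` satisfies
`J_{U_r}(u₁) = (1/√(1+r²)) · u₂(r)` and `J_{U_r}(u₂(r)) = -√(1+r²) · u₁`. -/
theorem JUr_on_generators (r : ℝ) (h₁ : u₁ ∈ Ur r) (h₂ : u₂ r ∈ Ur r)
    (R : Ur r →ₗ[ℝ] Ur r)
    (hRsymm : ∀ u v : Ur r, ⟪R u, v⟫ = ⟪u, R v⟫)
    (hRpos : ∀ u : Ur r, u ≠ 0 → 0 < ⟪R u, u⟫)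
    (hRsq : R ∘ₗ R = -(Gop (Ur r) ∘ₗ Gop (Ur r)))
    (Rinv : Ur r →ₗ[ℝ] Ur r)
    (hRinv : Rinv ∘ₗ R = LinearMap.id ∧ R ∘ₗ Rinv = LinearMap.id) :
    Rinv (Gop (Ur r) ⟨u₁, h₁⟩) = (1 / Real.sqrt (1 + r ^ 2)) • (⟨u₂ r, h₂⟩ : Ur r)
    ∧ Rinv (Gop (Ur r) ⟨u₂ r, h₂⟩) = -(Real.sqrt (1 + r ^ 2) • (⟨u₁, h₁⟩ : Ur r)) := by
  obtain ⟨hRinvL, hRinvR⟩ := hRinv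
  have hrpos : (0:ℝ) < 1 + r ^ 2 := by positivity
  have hspos : (0:ℝ) < Real.sqrt (1 + r ^ 2) := Real.sqrt_pos.2 hrpos
  set c : ℝ := (Real.sqrt (1 + r ^ 2))⁻¹ with hc
  have hcpos : 0 < c := by positivity
  have hc2 : c * c = (1 + r ^ 2)⁻¹ := by
    rw [hc, ← mul_inv, Real.mul_self_sqrt (by positivity)]
  -- decomposition of elements of Ur r
  have hdecomp : ∀ u : Ur r, ∃ a b : ℝ, u = a • (⟨u₁, h₁⟩ : Ur r) + b • (⟨u₂ r, h₂⟩ : Ur r) := by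
    intro u
    obtain ⟨a, b, hab⟩ := Submodule.mem_span_pair.1 u.2
    exact ⟨a, b, Subtype.ext hab.symm⟩
  -- -G² = (1+r²)⁻¹ • id
  have hGsq : ∀ u : Ur r, -(Gop (Ur r) (Gop (Ur r) u)) = (1 + r ^ 2)⁻¹ • u := by
    intro u
    obtain ⟨a, b, rfl⟩ := hdecomp u
    simp only [map_add, map_smul, Gop_u₁ r h₁ h₂, Gop_u₂ r h₁ h₂, map_neg, smul_neg,
      smul_add, smul_smul, neg_add_rev, neg_neg]
    module
  have hR2 : ∀ u : Ur r, R (R u) = (1 + r ^ 2)⁻¹ • u := by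
    intro u
    have := LinearMap.ext_iff.1 hRsq u
    simp only [LinearMap.comp_apply, LinearMap.neg_apply] at this
    rw [this, hGsq]
  -- R = c • id
  haveI : FiniteDimensional ℝ (Ur r) :=
    FiniteDimensional.span_of_finite ℝ (Set.toFinite _)
  set T : Ur r →ₗ[ℝ] Ur r := R + c • LinearMap.id with hT
  have hTinj : Function.Injective T := by
    rw [← LinearMap.ker_eq_bot, LinearMap.ker_eq_bot']
    intro u hu
    by_contra hne
    have h0 : R u = (-c) • u := by
      have h' : R u + c • u = 0 := by
        simpa [hT, LinearMap.add_apply] using hu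
      rw [neg_smul]
      exact eq_neg_of_add_eq_zero_left h'
    exact neg_smul_contra r R hRpos c hcpos u hne h0
  have hTsurj : Function.Surjective T := LinearMap.injective_iff_surjective.1 hTinj
  have hRc : ∀ v : Ur r, R v = c • v := by
    intro v
    obtain ⟨u, rfl⟩ := hTsurj v
    have h' : R (T u) - c • (T u) = 0 := by
      simp only [hT, LinearMap.add_apply, LinearMap.smul_apply, LinearMap.id_apply,
        map_add, map_smul, hR2 u, smul_add, smul_smul, hc2]
      module
    exact sub_eq_zero.mp h'
  have hRinvc : ∀ v : Ur r, Rinv v = c⁻¹ • v := by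
    intro v
    have h1 : R (Rinv v) = v := LinearMap.ext_iff.1 hRinvR v
    rw [hRc] at h1
    calc Rinv v = c⁻¹ • (c • Rinv v) := by
          rw [smul_smul, inv_mul_cancel₀ (ne_of_gt hcpos), one_smul]
      _ = c⁻¹ • v := by rw [h1]
  constructor
  · rw [Gop_u₁ r h₁ h₂, map_smul, hRinvc, smul_smul]
    congr 1
    rw [hc, inv_inv, one_div]
    rw [show (1 : ℝ) + r ^ 2
        = Real.sqrt (1 + r ^ 2) * Real.sqrt (1 + r ^ 2) from
      (Real.mul_self_sqrt (by positivity)).symm]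
    field_simp
    rw [Real.sqrt_sq hspos.le]
  · rw [Gop_u₂ r h₁ h₂, map_neg, hRinvc, hc, inv_inv]
end
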